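/- Let (X, μ) be a measure space, h > 0 and M ≥ 0. Let φ, ψ : X → ℂ be measurable functions such that for every x ∈ X one has Im ψ(x) ≥ 0, Im(φ(x) − ψ(x)) ≥ 0 and |φ(x) − ψ(x)| ≤ M, and suppose the function x ↦ exp((i/h)·ψ(x)) lies in L²(μ). Then the function x ↦ exp((i/h)·φ(x)) also lies in L²(μ), and ‖exp((i/h)φ) − exp((i/h)ψ)‖_{L²(μ)} ≤ (M/h) · ‖exp((i/h)ψ)‖_{L²(μ)}. -/

import Mathlib

/-!
Write `exp (i φ / h) = exp (i ψ / h) · exp z` with `z = i (φ - ψ) / h`. The hypothesis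
`Im (φ - ψ) ≥ 0` says `Re z ≤ 0`, so on the segment from `0` to `z` the derivative of `exp`
has norm at most `1` and hence `‖exp z - 1‖ ≤ ‖z‖ ≤ M / h`. This gives the pointwise bounds
`‖exp (i φ / h)‖ ≤ ‖exp (i ψ / h)‖` and
`‖exp (i φ / h) - exp (i ψ / h)‖ ≤ (M / h) ‖exp (i ψ / h)‖`, which integrate to the claim.
-/

open MeasureTheory

namespace Complex

theorem norm_exp_sub_one_le_of_re_nonpos {z : ℂ} (hz : z.re ≤ 0) : ‖exp z - 1‖ ≤ ‖z‖ := by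
  have hexp_le_one : ∀ w ∈ {w : ℂ | w.re ≤ 0}, ‖exp w‖ ≤ 1 := fun w hw => by
    rw [norm_exp]
    exact Real.exp_le_one_iff.mpr hw
  simpa using (convex_halfSpace_re_le 0).norm_image_sub_le_of_norm_hasDerivWithin_le
    (fun w _ => (hasDerivAt_exp w).hasDerivWithinAt) hexp_le_one
    (by simp : (0 : ℂ) ∈ {w : ℂ | w.re ≤ 0}) hz

theorem norm_exp_add_sub_exp_le {w z : ℂ} (hz : z.re ≤ 0) :
    ‖exp (w + z) - exp w‖ ≤ ‖z‖ * ‖exp w‖ := by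
  calc ‖exp (w + z) - exp w‖ = ‖exp z - 1‖ * ‖exp w‖ := by
        rw [exp_add, ← norm_mul, sub_mul, one_mul, mul_comm]
    _ ≤ ‖z‖ * ‖exp w‖ := by gcongr; exact norm_exp_sub_one_le_of_re_nonpos hz

theorem norm_exp_le_norm_exp_of_re_le {z w : ℂ} (h : z.re ≤ w.re) : ‖exp z‖ ≤ ‖exp w‖ := by
  rw [norm_exp, norm_exp]
  exact Real.exp_le_exp.mpr h

theorem re_I_div_ofReal_mul (h : ℝ) (z : ℂ) : (I / h * z).re = -z.im / h := by
  rw [div_mul_eq_mul_div, div_ofReal_re, I_mul_re]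

end Complex

open Complex

section

variable {X : Type*} [MeasurableSpace X] {μ : Measure X} {p : ENNReal} {f g : X → ℂ} {C : ℝ}

theorem MeasureTheory.MemLp.exp_of_re_sub_nonpos (hg : MemLp (fun x => exp (g x)) p μ)
    (hf : Measurable f) (hre : ∀ x, (f x - g x).re ≤ 0) : MemLp (fun x => exp (f x)) p μ :=
  hg.of_le (measurable_exp.comp hf).aestronglyMeasurable <| .of_forall fun x =>
    norm_exp_le_norm_exp_of_re_le <| by simpa [sub_nonpos] using hre x

theorem eLpNorm_exp_sub_exp_le (hre : ∀ x, (f x - g x).re ≤ 0) (hbd : ∀ x, ‖f x - g x‖ ≤ C) :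
    eLpNorm (fun x => exp (f x) - exp (g x)) p μ ≤
      ENNReal.ofReal C * eLpNorm (fun x => exp (g x)) p μ := by
  refine eLpNorm_le_mul_eLpNorm_of_ae_le_mul (.of_forall fun x => ?_) p
  calc ‖exp (f x) - exp (g x)‖ = ‖exp (g x + (f x - g x)) - exp (g x)‖ := by
        rw [add_sub_cancel]
    _ ≤ ‖f x - g x‖ * ‖exp (g x)‖ := norm_exp_add_sub_exp_le (hre x)
    _ ≤ C * ‖exp (g x)‖ := by gcongr; exact hbd x

end

theorem eLpNorm_exp_phase_perturbation_general {X : Type*} [MeasurableSpace X] (μ : Measure X)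
    (h M : ℝ) (hh : 0 < h) (φ ψ : X → ℂ)
    (hφmeas : Measurable φ)
    (himd : ∀ x, 0 ≤ (φ x - ψ x).im)
    (hbd : ∀ x, ‖φ x - ψ x‖ ≤ M)
    (hmem : MemLp (fun x => Complex.exp (Complex.I / (h : ℂ) * ψ x)) 2 μ) :
    MemLp (fun x => Complex.exp (Complex.I / (h : ℂ) * φ x)) 2 μ ∧
      eLpNorm (fun x => Complex.exp (Complex.I / (h : ℂ) * φ x) -
          Complex.exp (Complex.I / (h : ℂ) * ψ x)) 2 μ ≤
        ENNReal.ofReal (M / h) *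
          eLpNorm (fun x => Complex.exp (Complex.I / (h : ℂ) * ψ x)) 2 μ := by
  have hre : ∀ x, (I / h * φ x - I / h * ψ x).re ≤ 0 := fun x => by
    rw [← mul_sub, re_I_div_ofReal_mul]
    exact div_nonpos_of_nonpos_of_nonneg (neg_nonpos.mpr (himd x)) hh.le
  have hnorm : ∀ x, ‖I / h * φ x - I / h * ψ x‖ ≤ M / h := fun x => by
    rw [← mul_sub, norm_mul, norm_div, norm_I, norm_real, Real.norm_of_nonneg hh.le,
      one_div_mul_eq_div]
    exact div_le_div_of_nonneg_right (hbd x) hh.le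
  exact ⟨hmem.exp_of_re_sub_nonpos (measurable_const.mul hφmeas) hre,
    eLpNorm_exp_sub_exp_le hre hnorm⟩

/-- L² phase-comparison estimate: if `φ` is an `L^∞`-small perturbation (by at most `M`)
of a phase `ψ` with the stated nonnegative imaginary part conditions, and
`x ↦ exp ((I/h) ψ x)` is in `L²(μ)`, then so is `x ↦ exp ((I/h) φ x)`, and the `L²`
distance between the two oscillatory functions is at most `(M/h)` times the `L²` norm of
`x ↦ exp ((I/h) ψ x)`. -/
theorem eLpNorm_exp_phase_perturbation {X : Type*} [MeasurableSpace X] (μ : Measure X)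
    (h M : ℝ) (hh : 0 < h) (hM : 0 ≤ M) (φ ψ : X → ℂ)
    (hφmeas : Measurable φ) (hψmeas : Measurable ψ)
    (him : ∀ x, 0 ≤ (ψ x).im) (himd : ∀ x, 0 ≤ (φ x - ψ x).im)
    (hbd : ∀ x, ‖φ x - ψ x‖ ≤ M)
    (hmem : MemLp (fun x => Complex.exp (Complex.I / (h : ℂ) * ψ x)) 2 μ) :
    MemLp (fun x => Complex.exp (Complex.I / (h : ℂ) * φ x)) 2 μ ∧
      eLpNorm (fun x => Complex.exp (Complex.I / (h : ℂ) * φ x) -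
          Complex.exp (Complex.I / (h : ℂ) * ψ x)) 2 μ ≤
        ENNReal.ofReal (M / h) *
          eLpNorm (fun x => Complex.exp (Complex.I / (h : ℂ) * ψ x)) 2 μ :=
  eLpNorm_exp_phase_perturbation_general μ h M hh φ ψ hφmeas himd hbd hmem
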